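/- Let α ∈ ℕ, let m, m' ∈ ℕ_0 with m' ≤ m, and let i ∈ {1,…,2^m} and i' ∈ {1,…,2^{m'}} be such that 2^{m−m'}(i'−1) < i ≤ 2^{m−m'} i' (i.e. the support of h_{i,m} is contained in the support of h_{i',m'}). Then ∫_0^1 h_{i,m}^{(α)}(x) · h_{i',m'}^{(α)}(x) dx = (α!)²/(2α+1) · 2^{2α m' − m}, where h^{(α)} denotes the α-th derivative, taken on the open intervals where the functions are polynomial (the integrand vanishes outside the support of h_{i,m}). -/

import Mathlib

open MeasureTheory Real Filter

noncomputable section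

/-- The `k`-th normalized probabilists' Hermite polynomial evaluated at `x`:
`H_k(x) = He_k(x) / √(k!)` where `He_k` is the (monic) probabilists' Hermite polynomial,
i.e. `H_k(x) = ((-1)^k/√(k!)) e^{x²/2} (d^k/dx^k) e^{-x²/2}`. -/
noncomputable def hermiteN (k : ℕ) (x : ℝ) : ℝ :=
  ((Polynomial.hermite k).map (Int.castRingHom ℝ)).eval x / Real.sqrt (Nat.factorial k)

/-- Multivariate normalized Hermite polynomial `H_k(x) = ∏_j H_{k_j}(x_j)`. -/
noncomputable def hermiteMulti {s : ℕ} (k : Fin s → ℕ) (x : Fin s → ℝ) : ℝ :=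
  ∏ j, hermiteN (k j) (x j)

/-- The `s`-dimensional standard Gaussian density `φ_s(x) = (2π)^{-s/2} exp(-x·x/2)`. -/
noncomputable def gaussDensity (s : ℕ) (x : Fin s → ℝ) : ℝ :=
  (2 * π) ^ (-(s : ℝ) / 2) * Real.exp (-(∑ j, x j ^ 2) / 2)

/-- Partial derivative of `f : ℝ^s → ℝ` in coordinate `j`. -/
noncomputable def pDeriv {s : ℕ} (j : Fin s) (f : (Fin s → ℝ) → ℝ) : (Fin s → ℝ) → ℝ :=
  fun x => deriv (fun t => f (Function.update x j t)) (x j)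

/-- Mixed partial derivative `∂^τ f = ∂^{τ_1}_{x_1} ⋯ ∂^{τ_s}_{x_s} f`. -/
noncomputable def mDeriv {s : ℕ} (τ : Fin s → ℕ) (f : (Fin s → ℝ) → ℝ) : (Fin s → ℝ) → ℝ :=
  (List.finRange s).foldr (fun j g => (pDeriv j)^[τ j] g) f

/-- `f` possesses continuous mixed partial derivatives `∂^τ f` for all `τ ∈ {0,…,α}^s`:
each such mixed partial is continuous and, as long as the order in coordinate `j` is
below `α`, one further partial derivative in coordinate `j` exists. -/
def HasContMixedPartials (s α : ℕ) (f : (Fin s → ℝ) → ℝ) : Prop :=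
  ∀ τ : Fin s → ℕ, (∀ j, τ j ≤ α) →
    Continuous (mDeriv τ f) ∧
    ∀ (j : Fin s) (x : Fin s → ℝ), τ j < α →
      DifferentiableAt ℝ (fun t => mDeriv τ f (Function.update x j t)) (x j)

/-- The squared Hermite-space (Sobolev–Gauss) norm of smoothness `α`:
`‖f‖²_{s,α} = ∑_{τ ∈ {0,…,α}^s} ∫_{ℝ^s} (∂^τ f)² φ_s dx`. -/
noncomputable def hermiteNormSq (s α : ℕ) (f : (Fin s → ℝ) → ℝ) : ℝ :=
  ∑ τ : Fin s → Fin (α + 1),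
    ∫ x : Fin s → ℝ, (mDeriv (fun j => (τ j : ℕ)) f x) ^ 2 * gaussDensity s x

/-- All the integrals appearing in `‖f‖²_{s,α}` are finite. -/
def HermiteNormFinite (s α : ℕ) (f : (Fin s → ℝ) → ℝ) : Prop :=
  ∀ τ : Fin s → ℕ, (∀ j, τ j ≤ α) →
    Integrable (fun x : Fin s → ℝ => (mDeriv τ f x) ^ 2 * gaussDensity s x)

/-- The unit cube `[0,1]^s`. -/
def unitCube (s : ℕ) : Set (Fin s → ℝ) := Set.univ.pi fun _ => Set.Icc (0 : ℝ) 1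

/-- The squared ANOVA (unanchored Sobolev) norm of smoothness `α` on the unit cube.
A pair `(u, τ_u)` with `u ⊆ {1,…,s}` and `τ_u ∈ {0,…,α-1}^{|u|}` corresponds bijectively to
`τ ∈ {0,…,α}^s` via `u = {j : τ_j < α}`; the inner integration over `z_u` and outer
integration over `z_{-u}` are realized as integrals over the (volume-one) unit cube. -/
noncomputable def sobNormSq (s α : ℕ) (g : (Fin s → ℝ) → ℝ) : ℝ :=
  ∑ τ : Fin s → Fin (α + 1),
    ∫ y in unitCube s,
      (∫ w in unitCube s,
        mDeriv (fun j => (τ j : ℕ)) g (fun j => if (τ j : ℕ) < α then w j else y j)) ^ 2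

/-- `r_α(k)`: `r_α(0) = 1` and `r_α(k) = (∑_{τ=0}^{α} β_τ(k))⁻¹` for `k ≥ 1`, where
`β_τ(k) = k!/(k-τ)!` for `k ≥ τ` and `0` otherwise (the descending factorial). -/
noncomputable def rcoef (α k : ℕ) : ℝ :=
  if k = 0 then 1 else (∑ τ ∈ Finset.range (α + 1), (Nat.descFactorial k τ : ℝ))⁻¹

/-- `r_{s,α}(k) = ∏_j r_α(k_j)`. -/
noncomputable def rcoefMulti (s α : ℕ) (k : Fin s → ℕ) : ℝ := ∏ j, rcoef α (k j)

/-- Scaled shift `B_b : z ↦ 2bz - (b,…,b)` mapping `[0,1]^s` onto `[-b,b]^s`. -/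
def mapB (s : ℕ) (b : ℝ) (z : Fin s → ℝ) : Fin s → ℝ := fun j => 2 * b * z j - b

/-- `h` is the `τ`-th weak mixed partial derivative of `f`. -/
def IsWeakMixedDeriv (s : ℕ) (τ : Fin s → ℕ) (f h : (Fin s → ℝ) → ℝ) : Prop :=
  ∀ ρ : (Fin s → ℝ) → ℝ, ContDiff ℝ (⊤ : ℕ∞) ρ → HasCompactSupport ρ →
    ∫ x, f x * mDeriv τ ρ x = (-1 : ℝ) ^ (∑ i, τ i) * ∫ x, h x * ρ x

end

section AuxLemmas
open Polynomial intervalIntegral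

private lemma beta_nat : ∀ (k j : ℕ), (∫ x in (0:ℝ)..1, x ^ j * (1 - x) ^ k)
    = (j.factorial : ℝ) * k.factorial / (j + k + 1).factorial := by
  intro k
  induction k with
  | zero =>
    intro j
    simp only [pow_zero, mul_one, integral_pow, one_pow, Nat.factorial_zero, Nat.cast_one,
      add_zero]
    rw [zero_pow (by omega), Nat.factorial_succ]
    push_cast
    rw [sub_zero]
    field_simp
  | succ k ih =>
    intro j
    have h1 : ∀ x : ℝ, HasDerivAt (fun x : ℝ => x ^ (j+1)) (((j:ℝ)+1) * x ^ j) x := by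
      intro x; simpa using hasDerivAt_pow (j+1) x
    have h2 : ∀ x : ℝ, HasDerivAt (fun x : ℝ => (1 - x) ^ (k+1))
        (-(((k:ℝ)+1) * (1 - x) ^ k)) x := by
      intro x
      have := (hasDerivAt_pow (k+1) (1 - x)).comp x ((hasDerivAt_id x).const_sub 1)
      refine this.congr_deriv ?_
      push_cast; ring
    have hF : ∀ x : ℝ, HasDerivAt (fun x : ℝ => x ^ (j+1) * (1 - x) ^ (k+1))
        (((j:ℝ)+1) * (x ^ j * (1 - x) ^ (k+1)) + (-((k:ℝ)+1)) * (x ^ (j+1) * (1 - x) ^ k)) x := by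
      intro x
      have := (h1 x).mul (h2 x)
      refine this.congr_deriv ?_; ring
    have hInt := intervalIntegral.integral_eq_sub_of_hasDerivAt
      (f := fun x : ℝ => x ^ (j+1) * (1 - x) ^ (k+1)) (a := 0) (b := 1) (fun x _ => hF x)
      ((Continuous.intervalIntegrable (by fun_prop) _ _))
    rw [intervalIntegral.integral_add
        ((Continuous.intervalIntegrable (by fun_prop) _ _))
        ((Continuous.intervalIntegrable (by fun_prop) _ _)),
      intervalIntegral.integral_const_mul, intervalIntegral.integral_const_mul] at hInt
    simp only [one_pow, sub_self, zero_pow (Nat.succ_ne_zero k), mul_zero,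
      zero_pow (Nat.succ_ne_zero j), sub_zero, zero_mul, sub_zero] at hInt
    have hB := ih (j+1)
    rw [hB] at hInt
    have hj : ((j:ℝ)+1) ≠ 0 := by positivity
    have hfac : ((j + 1 + k + 1).factorial : ℝ) ≠ 0 := by positivity
    have hEq : (∫ x in (0:ℝ)..1, x ^ j * (1 - x) ^ (k+1))
        = ((k:ℝ)+1) * ((((j+1).factorial : ℝ) * k.factorial) / (j + 1 + k + 1).factorial)
          / ((j:ℝ)+1) := by
      field_simp at hInt ⊢
      linarith
    rw [hEq, show j + (k+1) + 1 = j + 1 + k + 1 from by omega]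
    rw [Nat.factorial_succ j, Nat.factorial_succ k]
    push_cast
    field_simp


private lemma eval_zero_of_lt (α j : ℕ) (hj : j < α) :
    (Polynomial.derivative^[j] ((X - X^2 : ℝ[X]) ^ α)).eval 0 = 0 := by
  have hdvd : (X : ℝ[X]) ^ α ∣ (X - X^2) ^ α :=
    pow_dvd_pow_of_dvd ⟨1 - X, by ring⟩ α
  obtain ⟨q, hq⟩ := Polynomial.pow_sub_dvd_iterate_derivative_of_pow_dvd j hdvd
  rw [hq, eval_mul, eval_pow, eval_X, zero_pow (by omega), zero_mul]

private lemma eval_one_of_lt (α j : ℕ) (hj : j < α) :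
    (Polynomial.derivative^[j] ((X - X^2 : ℝ[X]) ^ α)).eval 1 = 0 := by
  have hdvd : (X - 1 : ℝ[X]) ^ α ∣ (X - X^2) ^ α :=
    pow_dvd_pow_of_dvd ⟨-X, by ring⟩ α
  obtain ⟨q, hq⟩ := Polynomial.pow_sub_dvd_iterate_derivative_of_pow_dvd j hdvd
  rw [hq, eval_mul, eval_pow, eval_sub, eval_X, eval_one, sub_self, zero_pow (by omega), zero_mul]

private lemma eval_top_deriv (α : ℕ) (x : ℝ) :
    (Polynomial.derivative^[2*α] ((X - X^2 : ℝ[X]) ^ α)).eval x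
      = (-1:ℝ)^α * (2*α).factorial := by
  set p : ℝ[X] := (X - X^2) ^ α with hp
  have hdeg2 : (X - X^2 : ℝ[X]).natDegree = 2 := by compute_degree!
  have hdegp : p.natDegree = 2 * α := by
    rw [hp, natDegree_pow, hdeg2]; ring
  have hle : (Polynomial.derivative^[2*α] p).natDegree ≤ 0 := by
    have := Polynomial.natDegree_iterate_derivative p (2*α)
    omega
  have hC := Polynomial.eq_C_of_natDegree_le_zero hle
  rw [hC, eval_C, Polynomial.coeff_iterate_derivative, zero_add, Nat.descFactorial_self]
  have hlead : (X - X^2 : ℝ[X]).leadingCoeff = -1 := by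
    rw [Polynomial.leadingCoeff, hdeg2]
    simp [coeff_X, coeff_one]
  have hcoeff : p.coeff (2*α) = (-1:ℝ)^α := by
    have : p.coeff (2*α) = p.leadingCoeff := by rw [Polynomial.leadingCoeff, hdegp]
    rw [this, hp, Polynomial.leadingCoeff_pow, hlead]
  rw [hcoeff, nsmul_eq_mul]
  ring

private lemma key_integral (α : ℕ) (ε c : ℝ) :
    (∫ u in (0:ℝ)..1, (Polynomial.derivative^[α] ((X - X^2 : ℝ[X]) ^ α)).eval u *
        (Polynomial.derivative^[α] ((X - X^2 : ℝ[X]) ^ α)).eval (ε * u + c))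
      = ε ^ α * ((α.factorial : ℝ)^2 / (2 * (α:ℝ) + 1)) := by
  set g : ℝ[X] := (X - X^2) ^ α with hg
  set J : ℕ → ℝ := fun k => ∫ u in (0:ℝ)..1,
    (Polynomial.derivative^[α - k] g).eval u *
      (Polynomial.derivative^[α + k] g).eval (ε * u + c) with hJ
  have cont : ∀ (p q : ℝ[X]), Continuous fun u : ℝ =>
      p.eval u * q.eval (ε * u + c) := by
    intro p q
    exact (p.continuous_aeval.mul (q.continuous_aeval.comp (by fun_prop)))
  have step : ∀ k, k < α → J k = -ε * J (k+1) := by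
    intro k hk
    have h1 : ∀ u : ℝ, HasDerivAt (fun u : ℝ => (Polynomial.derivative^[α - k - 1] g).eval u)
        ((Polynomial.derivative^[α - k] g).eval u) u := by
      intro u
      have e1 : (⇑Polynomial.derivative)^[α - k] g
          = Polynomial.derivative ((⇑Polynomial.derivative)^[α - k - 1] g) := by
        conv_lhs => rw [show α - k = (α - k - 1) + 1 from by omega]
        rw [Function.iterate_succ_apply']
      rw [e1]
      exact (Polynomial.derivative^[α - k - 1] g).hasDerivAt u
    have h2 : ∀ u : ℝ, HasDerivAt
        (fun u : ℝ => (Polynomial.derivative^[α + k] g).eval (ε * u + c))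
        (ε * (Polynomial.derivative^[α + k + 1] g).eval (ε * u + c)) u := by
      intro u
      have inner : HasDerivAt (fun u : ℝ => ε * u + c) ε u := by
        simpa using ((hasDerivAt_id u).const_mul ε).add_const c
      have := ((Polynomial.derivative^[α + k] g).hasDerivAt (ε * u + c)).comp u inner
      rw [Function.iterate_succ_apply']
      refine this.congr_deriv ?_
      ring
    have hF : ∀ u : ℝ, HasDerivAt
        (fun u : ℝ => (Polynomial.derivative^[α - k - 1] g).eval u *
          (Polynomial.derivative^[α + k] g).eval (ε * u + c))
        ((Polynomial.derivative^[α - k] g).eval u *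
            (Polynomial.derivative^[α + k] g).eval (ε * u + c) +
          ε * ((Polynomial.derivative^[α - k - 1] g).eval u *
            (Polynomial.derivative^[α + k + 1] g).eval (ε * u + c))) u := by
      intro u
      have := (h1 u).mul (h2 u)
      refine this.congr_deriv ?_
      ring
    have hInt := intervalIntegral.integral_eq_sub_of_hasDerivAt
      (a := (0:ℝ)) (b := 1) (fun u _ => hF u)
      (((cont _ _).add (continuous_const.mul (cont _ _))).intervalIntegrable _ _)
    rw [intervalIntegral.integral_add ((cont _ _).intervalIntegrable _ _)
        (((cont _ _).const_mul ε).intervalIntegrable _ _),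
      intervalIntegral.integral_const_mul] at hInt
    rw [eval_zero_of_lt α (α - k - 1) (by omega), eval_one_of_lt α (α - k - 1) (by omega)] at hInt
    simp only [zero_mul, sub_zero, sub_self] at hInt
    have hsub : α - (k+1) = α - k - 1 := by omega
    rw [hJ]
    simp only [hsub, show α + (k+1) = α + k + 1 from by omega]
    linarith [hInt]
  have chain : ∀ k, k ≤ α → J 0 = (-ε)^k * J k := by
    intro k
    induction k with
    | zero => intro _; simp
    | succ k ih =>
      intro hk
      rw [ih (by omega), step k (by omega), pow_succ]
      ring
  have hJα : J α = (-1:ℝ)^α * (2*α).factorial *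
      ((α.factorial : ℝ) * α.factorial / (α + α + 1).factorial) := by
    rw [hJ]
    simp only [Nat.sub_self, Function.iterate_zero, id_eq]
    have : ∀ u : ℝ, g.eval u * (Polynomial.derivative^[α + α] g).eval (ε * u + c)
        = ((-1:ℝ)^α * (2*α).factorial) * (u ^ α * (1 - u) ^ α) := by
      intro u
      rw [show α + α = 2 * α from by omega, eval_top_deriv α, hg]
      rw [eval_pow, eval_sub, eval_X, eval_pow, eval_X]
      rw [show u - u^2 = u * (1 - u) from by ring, mul_pow]
      ring
    rw [intervalIntegral.integral_congr (fun u _ => this u),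
      intervalIntegral.integral_const_mul, beta_nat α α]
  have hJ0 : J 0 = ∫ u in (0:ℝ)..1, (Polynomial.derivative^[α] g).eval u *
      (Polynomial.derivative^[α] g).eval (ε * u + c) := by
    rw [hJ]; simp
  rw [← hJ0, chain α le_rfl, hJα]
  have hfac : ((α + α + 1).factorial : ℝ) = (2*(α:ℝ)+1) * (2*α).factorial := by
    rw [show α + α + 1 = (2*α) + 1 from by omega, Nat.factorial_succ]
    push_cast; ring
  rw [hfac]
  have h2 : (2*(α:ℝ)+1) ≠ 0 := by positivity
  have h3 : ((2*α).factorial : ℝ) ≠ 0 := by positivity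
  have hmp : (-ε)^α * (-1:ℝ)^α = ε^α := by
    rw [← mul_pow]; norm_num
  have hm1 : (-1:ℝ)^(α*2) = 1 := by rw [mul_comm, pow_mul]; norm_num
  field_simp
  linear_combination (((2*α).factorial : ℝ) * (α.factorial:ℝ) * α.factorial * (2*(α:ℝ)+1)) * hmp + (ε^α - ε^α * ((2*α).factorial : ℝ) * (α.factorial:ℝ)^2 * (2*(α:ℝ)+1)) * hm1


open Polynomial in
/-- Let `h^{(α)}_{i,m}(x) = 2^{αm} g^{(α)}(2^m x - (i-1))` on the open
support `((i-1)/2^m, i/2^m)` of `h_{i,m}` and `0` otherwise, where `g^{(α)}` is the `α`-th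
(polynomial) derivative of `g(x) = (x - x²)^α`.  If `m' ≤ m` and the support of `h_{i,m}` is
contained in that of `h_{i',m'}` (i.e. `2^{m-m'}(i'-1) < i ≤ 2^{m-m'} i'`), then
`∫₀¹ h^{(α)}_{i,m}(x) h^{(α)}_{i',m'}(x) dx = (α!)²/(2α+1) · 2^{2αm' - m}`. -/
theorem integral_bump_derivs (α : ℕ) (hα : 0 < α) (m m' : ℕ) (hmm : m' ≤ m)
    (i i' : ℕ) (hi1 : 1 ≤ i) (hi2 : i ≤ 2 ^ m) (hi'1 : 1 ≤ i') (hi'2 : i' ≤ 2 ^ m')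
    (hsupp1 : 2 ^ (m - m') * (i' - 1) < i) (hsupp2 : i ≤ 2 ^ (m - m') * i') :
    (∫ x in (0 : ℝ)..1,
        (if ((i : ℝ) - 1) / 2 ^ m < x ∧ x < (i : ℝ) / 2 ^ m then
            (2 : ℝ) ^ (α * m) *
              (Polynomial.derivative^[α] ((X - X ^ 2 : ℝ[X]) ^ α)).eval
                (2 ^ m * x - ((i : ℝ) - 1))
          else 0) *
        (if ((i' : ℝ) - 1) / 2 ^ m' < x ∧ x < (i' : ℝ) / 2 ^ m' then
            (2 : ℝ) ^ (α * m') *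
              (Polynomial.derivative^[α] ((X - X ^ 2 : ℝ[X]) ^ α)).eval
                (2 ^ m' * x - ((i' : ℝ) - 1))
          else 0)) =
      (α.factorial : ℝ) ^ 2 / (2 * (α : ℝ) + 1) * ((2 : ℝ) ^ (2 * α * m') / 2 ^ m) := by
  set P : ℝ[X] := Polynomial.derivative^[α] ((X - X ^ 2 : ℝ[X]) ^ α) with hP
  set a : ℝ := ((i : ℝ) - 1) / 2 ^ m with ha
  set b : ℝ := (i : ℝ) / 2 ^ m with hb
  set a' : ℝ := ((i' : ℝ) - 1) / 2 ^ m' with ha'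
  set b' : ℝ := (i' : ℝ) / 2 ^ m' with hb'
  have h2m : (0:ℝ) < 2 ^ m := by positivity
  have h2m' : (0:ℝ) < 2 ^ m' := by positivity
  have hiR : (1:ℝ) ≤ (i:ℝ) := by exact_mod_cast hi1
  have hpow : (2:ℝ) ^ (m - m') * 2 ^ m' = 2 ^ m := by
    rw [← pow_add]; congr 1; omega
  -- cast the support inequalities
  have key1 : ((i':ℝ) - 1) * 2 ^ m ≤ ((i:ℝ) - 1) * 2 ^ m' := by
    have h1 : (2:ℝ) ^ (m - m') * ((i':ℝ) - 1) ≤ (i:ℝ) - 1 := by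
      have hN : 2 ^ (m - m') * (i' - 1) ≤ i - 1 := by omega
      have := (Nat.cast_le (α := ℝ)).mpr hN
      push_cast [Nat.cast_sub hi'1, Nat.cast_sub hi1] at this
      linarith
    nlinarith
  have key2 : (i:ℝ) * 2 ^ m' ≤ (i':ℝ) * 2 ^ m := by
    have h1 : (i:ℝ) ≤ (2:ℝ) ^ (m - m') * (i':ℝ) := by
      have := (Nat.cast_le (α := ℝ)).mpr hsupp2
      push_cast at this
      linarith
    nlinarith
  have ha'a : a' ≤ a := by
    rw [ha, ha', div_le_div_iff₀ h2m' h2m]; exact key1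
  have hbb' : b ≤ b' := by
    rw [hb, hb', div_le_div_iff₀ h2m h2m']; exact key2
  have ha0 : (0:ℝ) ≤ a := by
    rw [ha]
    apply div_nonneg (by linarith) (le_of_lt h2m)
  have hab : a < b := by
    rw [ha, hb, div_lt_div_iff₀ h2m h2m]; nlinarith
  have hb1 : b ≤ 1 := by
    rw [hb, div_le_one h2m]; exact_mod_cast hi2
  -- step 1: rewrite integrand as indicator
  set F : ℝ → ℝ := fun x => (2:ℝ)^(α*m) * P.eval (2 ^ m * x - ((i:ℝ) - 1)) *
    ((2:ℝ)^(α*m') * P.eval (2 ^ m' * x - ((i':ℝ) - 1))) with hF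
  have hind : ∀ x : ℝ,
      (if a < x ∧ x < b then (2:ℝ)^(α*m) * P.eval (2 ^ m * x - ((i:ℝ) - 1)) else 0) *
      (if a' < x ∧ x < b' then (2:ℝ)^(α*m') * P.eval (2 ^ m' * x - ((i':ℝ) - 1)) else 0)
        = (Set.Ioo a b).indicator F x := by
    intro x
    by_cases h : a < x ∧ x < b
    · rw [if_pos h, if_pos ⟨lt_of_le_of_lt ha'a h.1, lt_of_lt_of_le h.2 hbb'⟩,
        Set.indicator_of_mem (Set.mem_Ioo.mpr h)]
    · rw [if_neg h, zero_mul, Set.indicator_of_notMem (by simpa [Set.mem_Ioo] using h)]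
  calc (∫ x in (0 : ℝ)..1,
        (if a < x ∧ x < b then (2:ℝ)^(α*m) * P.eval (2 ^ m * x - ((i:ℝ) - 1)) else 0) *
        (if a' < x ∧ x < b' then (2:ℝ)^(α*m') * P.eval (2 ^ m' * x - ((i':ℝ) - 1)) else 0))
      = ∫ x in (0:ℝ)..1, (Set.Ioo a b).indicator F x :=
        intervalIntegral.integral_congr (fun x _ => hind x)
    _ = ∫ x in Set.Ioc (0:ℝ) 1, (Set.Ioo a b).indicator F x := by
        rw [intervalIntegral.integral_of_le zero_le_one]
    _ = ∫ x in Set.Ioc (0:ℝ) 1 ∩ Set.Ioo a b, F x := by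
        rw [setIntegral_indicator measurableSet_Ioo]
    _ = ∫ x in Set.Ioo a b, F x := by
        rw [show Set.Ioc (0:ℝ) 1 ∩ Set.Ioo a b = Set.Ioo a b from
          Set.inter_eq_right.mpr (fun x hx =>
            ⟨lt_of_le_of_lt ha0 hx.1, le_trans hx.2.le hb1⟩)]
    _ = ∫ x in a..b, F x := by
        rw [intervalIntegral.integral_of_le hab.le, integral_Ioc_eq_integral_Ioo]
  -- step 2: substitution
  set ε : ℝ := 2 ^ m' / 2 ^ m with hε
  set c : ℝ := ε * ((i:ℝ) - 1) - ((i':ℝ) - 1) with hc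
  have harg : ∀ x : ℝ, 2 ^ m' * x - ((i':ℝ) - 1)
      = ε * (2 ^ m * x - ((i:ℝ) - 1)) + c := by
    intro x
    rw [hc, hε]
    field_simp
    ring
  have hkey : (∫ u in (0:ℝ)..1, P.eval u * P.eval (ε * u + c))
      = ε ^ α * ((α.factorial : ℝ)^2 / (2 * (α:ℝ) + 1)) := by
    rw [hP]; exact key_integral α ε c
  set G : ℝ → ℝ := fun u => P.eval u * P.eval (ε * u + c) with hG
  have hFG : ∀ x : ℝ, F x = ((2:ℝ)^(α*m) * 2^(α*m')) * G (2 ^ m * x - ((i:ℝ) - 1)) := by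
    intro x
    rw [hF, hG]
    simp only
    rw [harg x]
    ring
  rw [intervalIntegral.integral_congr (fun x _ => hFG x),
    intervalIntegral.integral_const_mul,
    intervalIntegral.integral_comp_mul_sub G (ne_of_gt h2m) ((i:ℝ) - 1)]
  have e0 : 2 ^ m * a - ((i:ℝ) - 1) = 0 := by
    rw [ha]; field_simp; ring
  have e1 : 2 ^ m * b - ((i:ℝ) - 1) = 1 := by
    rw [hb]; field_simp; ring
  rw [e0, e1]
  have hGint : (∫ x in (0:ℝ)..1, G x) = ε ^ α * ((α.factorial : ℝ)^2 / (2 * (α:ℝ) + 1)) := hkey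
  rw [hGint, smul_eq_mul, hε]
  have h2mne : (2:ℝ) ^ m ≠ 0 := ne_of_gt h2m
  have h2mne' : (2:ℝ) ^ m' ≠ 0 := ne_of_gt h2m'
  rw [show (2:ℝ)^(α*m) = ((2:ℝ)^m)^α from by rw [← pow_mul, Nat.mul_comm],
    show (2:ℝ)^(α*m') = ((2:ℝ)^m')^α from by rw [← pow_mul, Nat.mul_comm],
    show (2:ℝ)^(2*α*m') = (((2:ℝ)^m')^α)^2 from by rw [← pow_mul, ← pow_mul]; congr 1; ring,
    div_pow]
  have hden : (0:ℝ) < 2*(α:ℝ)+1 := by positivity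
  field_simp
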